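/- (Lemma C.2, quantitative lower bound in rescaled form) Let s > 0 and let N be a real number with 2s < N < 4s. Define F : (0,∞) → ℝ by F(t) := t^{2s} − t^{N−2s}, and set t₀ := ((N−2s)/(2s))^{1/(4s−N)}. Then t₀ is the unique global minimum point of F on (0,∞), and there exists c > 0 such that F(t) − F(t₀) ≥ c·(t−t₀)² for all t ∈ (0, 2t₀], and F(t) − F(t₀) ≥ c·t₀^{N−2s} for all t > 2t₀. -/

import Mathlib

/-!
Write `a = 2s`, `b = N - 2s`, so `0 < b < a` and `t₀ ^ (a - b) = b / a`. Then
`t ^ a - t ^ b = t₀ ^ b * g (t / t₀)` with `g u = (b / a) u ^ a - u ^ b`, so everything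
reduces to `g` near its minimum point `u = 1`. Since `g' u = b u ^ (b - 1) (u ^ (a - b) - 1)`,
`g` decreases on `(0, 1]` and increases on `[1, ∞)`. On `[1/2, 2]` the bound
`2 ^ (-|r|) ≤ u ^ r` controls both `u ^ (b - 1)` and, by the mean value theorem, the slope
of `u ^ (a - b)`, so `g' u (u - 1) ≥ 2K (u - 1) ^ 2`: then `g - K (· - 1) ^ 2` decreases up
to `1` and increases after it. Outside `[1/2, 2]` monotonicity of `g` gives the uniform
bounds `g (1/2) - g 1` and `g 2 - g 1`.
-/

open Real

noncomputable section

/-- The rescaled function `F(t) = t^{2s} - t^{N-2s}` of Lemma C.2. -/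
def Fres (s N t : ℝ) : ℝ := t ^ (2 * s) - t ^ (N - 2 * s)

/-- The minimum point `t₀ = ((N-2s)/(2s))^{1/(4s-N)}` of `F` on `(0,∞)`. -/
def t0res (s N : ℝ) : ℝ := ((N - 2 * s) / (2 * s)) ^ (1 / (4 * s - N))

open Set

theorem mul_sq_le_sub_of_hasDerivAt {f f' : ℝ → ℝ} {l r x₀ K : ℝ} (hx₀ : x₀ ∈ Icc l r)
    (hf : ∀ x ∈ Icc l r, HasDerivAt f (f' x) x)
    (hf' : ∀ x ∈ Ioo l r, 2 * K * (x - x₀) ^ 2 ≤ f' x * (x - x₀))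
    {x : ℝ} (hx : x ∈ Icc l r) :
    K * (x - x₀) ^ 2 ≤ f x - f x₀ := by
  set φ : ℝ → ℝ := fun y => f y - K * (y - x₀) ^ 2
  have hφ : ∀ y ∈ Icc l r, HasDerivAt φ (f' y - 2 * K * (y - x₀)) y := by
    intro y hy
    have := (hf y hy).sub ((((hasDerivAt_id' y).sub_const x₀).pow 2).const_mul K)
    exact this.congr_deriv (by norm_num; ring)
  have hφ_cont : ContinuousOn φ (Icc l r) := fun y hy =>
    (hφ y hy).continuousAt.continuousWithinAt
  suffices φ x₀ ≤ φ x by simp only [φ, sub_self] at this; linarith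
  rcases le_total x₀ x with hle | hle
  · refine monotoneOn_of_hasDerivWithinAt_nonneg (convex_Icc x₀ r)
      (hφ_cont.mono (Icc_subset_Icc_left hx₀.1))
      (fun y hy =>
        (hφ y (Icc_subset_Icc_left hx₀.1 (interior_subset hy))).hasDerivWithinAt)
      (fun y hy => ?_) ⟨le_rfl, hx₀.2⟩ ⟨hle, hx.2⟩ hle
    rw [interior_Icc] at hy
    have := hf' y ⟨hx₀.1.trans_lt hy.1, hy.2⟩
    nlinarith [hy.1]
  · refine antitoneOn_of_hasDerivWithinAt_nonpos (convex_Icc l x₀)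
      (hφ_cont.mono (Icc_subset_Icc_right hx₀.2))
      (fun y hy =>
        (hφ y (Icc_subset_Icc_right hx₀.2 (interior_subset hy))).hasDerivWithinAt)
      (fun y hy => ?_) ⟨hx.1, hle⟩ ⟨hx₀.1, le_rfl⟩ hle
    rw [interior_Icc] at hy
    have := hf' y ⟨hy.1, hy.2.trans_le hx₀.2⟩
    nlinarith [hy.2]

theorem two_rpow_neg_abs_le_rpow {u : ℝ} (hu : u ∈ Icc (1 / 2 : ℝ) 2) (r : ℝ) :
    (2 : ℝ) ^ (-|r|) ≤ u ^ r := by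
  rcases le_total 0 r with hr | hr
  · rw [abs_of_nonneg hr, rpow_neg zero_le_two, ← inv_rpow zero_le_two]
    exact rpow_le_rpow (by norm_num) (by linarith [hu.1]) hr
  · rw [abs_of_nonpos hr, neg_neg]
    exact rpow_le_rpow_of_nonpos (by linarith [hu.1]) hu.2 hr

theorem mul_sq_le_rpow_sub_one_mul {p u : ℝ} (hp : 0 ≤ p) (hu : u ∈ Icc (1 / 2 : ℝ) 2) :
    p * 2 ^ (-|p - 1|) * (u - 1) ^ 2 ≤ (u ^ p - 1) * (u - 1) := by
  have hderiv :
      ∀ x ∈ Icc (1 / 2 : ℝ) 2, HasDerivAt (fun y : ℝ => y ^ p) (p * x ^ (p - 1)) x :=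
    fun x hx => hasDerivAt_rpow_const (Or.inl (by linarith [hx.1]))
  have hslope := (convex_Icc (1 / 2 : ℝ) 2).mul_sub_le_image_sub_of_le_deriv
    (fun x hx => (hderiv x hx).continuousAt.continuousWithinAt)
    (fun x hx => (hderiv x (interior_subset hx)).differentiableAt.differentiableWithinAt)
    (C := p * 2 ^ (-|p - 1|)) (fun x hx => by
      rw [(hderiv x (interior_subset hx)).deriv]
      exact mul_le_mul_of_nonneg_left (two_rpow_neg_abs_le_rpow (interior_subset hx) _) hp)
  have h1 : (1 : ℝ) ∈ Icc (1 / 2 : ℝ) 2 := by norm_num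
  rcases le_total u 1 with hle | hle
  · have := hslope u hu 1 h1 hle
    rw [one_rpow] at this
    nlinarith
  · have := hslope 1 h1 u hu hle
    rw [one_rpow] at this
    nlinarith

def normalizedProfile (a b u : ℝ) : ℝ := b / a * u ^ a - u ^ b

namespace normalizedProfile

variable {a b : ℝ}

theorem hasDerivAt (ha : a ≠ 0) {u : ℝ} (hu : 0 < u) :
    HasDerivAt (normalizedProfile a b) (b * u ^ (b - 1) * (u ^ (a - b) - 1)) u := by
  have h := ((hasDerivAt_rpow_const (p := a) (Or.inl hu.ne')).const_mul (b / a)).sub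
    (hasDerivAt_rpow_const (p := b) (Or.inl hu.ne'))
  refine h.congr_deriv ?_
  rw [show a - 1 = (b - 1) + (a - b) by ring, rpow_add hu]
  field_simp

theorem strictMonoOn (hb : 0 < b) (hab : b < a) :
    StrictMonoOn (normalizedProfile a b) (Ici 1) := by
  refine strictMonoOn_of_hasDerivWithinAt_pos (convex_Ici 1)
    (f' := fun x => b * x ^ (b - 1) * (x ^ (a - b) - 1))
    (fun x hx =>
      (hasDerivAt (hb.trans hab).ne' (one_pos.trans_le hx)).continuousAt.continuousWithinAt)
    (fun x hx => ?_) (fun x hx => ?_)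
  all_goals rw [interior_Ici] at hx
  · exact (hasDerivAt (hb.trans hab).ne' (one_pos.trans hx)).hasDerivWithinAt
  · have hx0 : 0 < x := one_pos.trans hx
    have : 1 < x ^ (a - b) := one_lt_rpow hx (by linarith)
    have : 0 < x ^ (b - 1) := rpow_pos_of_pos hx0 _
    have : 0 < b * x ^ (b - 1) := by positivity
    nlinarith

theorem strictAntiOn (hb : 0 < b) (hab : b < a) :
    StrictAntiOn (normalizedProfile a b) (Ioc 0 1) := by
  refine strictAntiOn_of_hasDerivWithinAt_neg (convex_Ioc 0 1)
    (f' := fun x => b * x ^ (b - 1) * (x ^ (a - b) - 1))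
    (fun x hx => (hasDerivAt (hb.trans hab).ne' hx.1).continuousAt.continuousWithinAt)
    (fun x hx => ?_) (fun x hx => ?_)
  all_goals rw [interior_Ioc] at hx
  · exact (hasDerivAt (hb.trans hab).ne' hx.1).hasDerivWithinAt
  · have : x ^ (a - b) < 1 := rpow_lt_one hx.1.le hx.2 (by linarith)
    have : 0 < x ^ (b - 1) := rpow_pos_of_pos hx.1 _
    have : 0 < b * x ^ (b - 1) := by positivity
    nlinarith

theorem lt_of_ne_one (hb : 0 < b) (hab : b < a) {u : ℝ} (hu : 0 < u) (hu1 : u ≠ 1) :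
    normalizedProfile a b 1 < normalizedProfile a b u := by
  rcases hu1.lt_or_gt with h | h
  · exact strictAntiOn hb hab ⟨hu, h.le⟩ ⟨one_pos, le_rfl⟩ h
  · exact strictMonoOn hb hab (mem_Ici.2 le_rfl) h.le h

theorem exists_mul_sq_le_sub_on_Icc (hb : 0 < b) (hab : b < a) :
    ∃ K, 0 < K ∧ ∀ u ∈ Icc (1 / 2 : ℝ) 2,
      K * (u - 1) ^ 2 ≤ normalizedProfile a b u - normalizedProfile a b 1 := by
  have hp : 0 < a - b := by linarith
  refine ⟨b * 2 ^ (-|b - 1|) * ((a - b) * 2 ^ (-|a - b - 1|)) / 2, by positivity,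
    fun u hu => ?_⟩
  refine mul_sq_le_sub_of_hasDerivAt (by norm_num)
    (fun x hx => hasDerivAt (hb.trans hab).ne' (by linarith [hx.1])) (fun x hx => ?_) hu
  have hx : x ∈ Icc (1 / 2 : ℝ) 2 := Ioo_subset_Icc_self hx
  calc 2 * (b * 2 ^ (-|b - 1|) * ((a - b) * 2 ^ (-|a - b - 1|)) / 2) * (x - 1) ^ 2
      = (b * 2 ^ (-|b - 1|)) * ((a - b) * 2 ^ (-|a - b - 1|) * (x - 1) ^ 2) := by ring
    _ ≤ (b * x ^ (b - 1)) * ((x ^ (a - b) - 1) * (x - 1)) := by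
        refine mul_le_mul ?_ (mul_sq_le_rpow_sub_one_mul hp.le hx) (by positivity) ?_
        · exact mul_le_mul_of_nonneg_left (two_rpow_neg_abs_le_rpow hx _) hb.le
        · exact mul_nonneg hb.le (rpow_nonneg (by linarith [hx.1]) _)
    _ = b * x ^ (b - 1) * (x ^ (a - b) - 1) * (x - 1) := by ring

theorem exists_lower_bounds (hb : 0 < b) (hab : b < a) :
    ∃ c, 0 < c ∧
      (∀ u, 0 < u → u ≤ 2 →
        c * (u - 1) ^ 2 ≤ normalizedProfile a b u - normalizedProfile a b 1) ∧
      (∀ u, 2 < u → c ≤ normalizedProfile a b u - normalizedProfile a b 1) := by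
  set g := normalizedProfile a b
  obtain ⟨K, hK, hquad⟩ := exists_mul_sq_le_sub_on_Icc hb hab
  have hhalf : g 1 < g (1 / 2) := lt_of_ne_one hb hab (by norm_num) (by norm_num)
  have htwo : g 1 < g 2 := lt_of_ne_one hb hab (by norm_num) (by norm_num)
  refine ⟨min K (min (g (1 / 2) - g 1) (g 2 - g 1)), by positivity, fun u hu hu2 => ?_,
    fun u hu => ?_⟩
  · rcases le_or_gt u (1 / 2) with hle | hlt
    · have : g (1 / 2) ≤ g u :=
        (strictAntiOn hb hab).antitoneOn ⟨hu, by linarith⟩ (by norm_num) hle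
      have : (u - 1) ^ 2 ≤ 1 := by nlinarith
      calc min K (min (g (1 / 2) - g 1) (g 2 - g 1)) * (u - 1) ^ 2
          ≤ (g (1 / 2) - g 1) * 1 := by
            gcongr; exact (min_le_right _ _).trans (min_le_left _ _)
        _ ≤ g u - g 1 := by linarith
    · calc min K (min (g (1 / 2) - g 1) (g 2 - g 1)) * (u - 1) ^ 2
          ≤ K * (u - 1) ^ 2 := by gcongr; exact min_le_left _ _
        _ ≤ g u - g 1 := hquad u ⟨hlt.le, hu2⟩
  · have : g 2 < g u := strictMonoOn hb hab (by norm_num) (mem_Ici.2 (by linarith)) hu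
    have : min K (min (g (1 / 2) - g 1) (g 2 - g 1)) ≤ g 2 - g 1 :=
      (min_le_right _ _).trans (min_le_right _ _)
    linarith

end normalizedProfile

section

variable {a b t₀ : ℝ}

theorem rpow_sub_rpow_eq_mul_normalizedProfile (ha : a ≠ 0) (hb : b ≠ 0) (ht₀ : 0 < t₀)
    (ht₀ab : t₀ ^ (a - b) = b / a) {t : ℝ} (ht : 0 ≤ t) :
    t ^ a - t ^ b = t₀ ^ b * normalizedProfile a b (t / t₀) := by
  have hpow : t₀ ^ a = t₀ ^ b * (b / a) := by
    rw [← ht₀ab, ← rpow_add ht₀]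
    ring_nf
  have : t₀ ^ b ≠ 0 := (rpow_pos_of_pos ht₀ b).ne'
  rw [normalizedProfile, div_rpow ht ht₀.le, div_rpow ht ht₀.le, hpow]
  field_simp

theorem rpow_sub_rpow_quadratic_growth (hb : 0 < b) (hab : b < a) (ht₀ : 0 < t₀)
    (ht₀ab : t₀ ^ (a - b) = b / a) :
    (∀ t : ℝ, 0 < t → t ≠ t₀ → t₀ ^ a - t₀ ^ b < t ^ a - t ^ b) ∧
      ∃ c : ℝ, 0 < c ∧
        (∀ t : ℝ, 0 < t → t ≤ 2 * t₀ →
          c * (t - t₀) ^ 2 ≤ (t ^ a - t ^ b) - (t₀ ^ a - t₀ ^ b)) ∧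
        (∀ t : ℝ, 2 * t₀ < t → c * t₀ ^ b ≤ (t ^ a - t ^ b) - (t₀ ^ a - t₀ ^ b)) := by
  set g := normalizedProfile a b
  have ha : a ≠ 0 := (hb.trans hab).ne'
  have hscale : ∀ t, 0 < t →
      (t ^ a - t ^ b) - (t₀ ^ a - t₀ ^ b) = t₀ ^ b * (g (t / t₀) - g 1) := by
    intro t ht
    rw [rpow_sub_rpow_eq_mul_normalizedProfile ha hb.ne' ht₀ ht₀ab ht.le,
      rpow_sub_rpow_eq_mul_normalizedProfile ha hb.ne' ht₀ ht₀ab ht₀.le, div_self ht₀.ne',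
      mul_sub]
  have hb₀ : 0 < t₀ ^ b := rpow_pos_of_pos ht₀ b
  obtain ⟨c, hc, hnear, hfar⟩ := normalizedProfile.exists_lower_bounds hb hab
  refine ⟨fun t ht hne => ?_, min (c * t₀ ^ b / t₀ ^ 2) c, by positivity, fun t ht ht2 => ?_,
    fun t ht2 => ?_⟩
  · rw [← sub_pos, hscale t ht]
    refine mul_pos hb₀ (sub_pos.2 (normalizedProfile.lt_of_ne_one hb hab (div_pos ht ht₀) ?_))
    rwa [Ne, div_eq_one_iff_eq ht₀.ne']
  · have hu := hnear (t / t₀) (div_pos ht ht₀) ((div_le_iff₀ ht₀).2 (by linarith))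
    have hsq : (t - t₀) ^ 2 = t₀ ^ 2 * (t / t₀ - 1) ^ 2 := by field_simp
    calc min (c * t₀ ^ b / t₀ ^ 2) c * (t - t₀) ^ 2
        ≤ c * t₀ ^ b / t₀ ^ 2 * (t₀ ^ 2 * (t / t₀ - 1) ^ 2) := by
          rw [hsq]; gcongr; exact min_le_left _ _
      _ = t₀ ^ b * (c * (t / t₀ - 1) ^ 2) := by field_simp
      _ ≤ (t ^ a - t ^ b) - (t₀ ^ a - t₀ ^ b) := by
          rw [hscale t (by positivity)]; gcongr
  · have ht : 0 < t := by linarith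
    have hu := hfar (t / t₀) ((lt_div_iff₀ ht₀).2 (by linarith))
    calc min (c * t₀ ^ b / t₀ ^ 2) c * t₀ ^ b ≤ t₀ ^ b * c := by
          rw [mul_comm]; gcongr; exact min_le_right _ _
      _ ≤ (t ^ a - t ^ b) - (t₀ ^ a - t₀ ^ b) := by rw [hscale t ht]; gcongr

end

theorem statement16_general (s N : ℝ) (hN1 : 2 * s < N) (hN2 : N < 4 * s) :
    (∀ t : ℝ, 0 < t → t ≠ t0res s N → Fres s N (t0res s N) < Fres s N t) ∧
      ∃ c : ℝ, 0 < c ∧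
        (∀ t : ℝ, 0 < t → t ≤ 2 * t0res s N →
          c * (t - t0res s N) ^ 2 ≤ Fres s N t - Fres s N (t0res s N)) ∧
        (∀ t : ℝ, 2 * t0res s N < t →
          c * t0res s N ^ (N - 2 * s) ≤ Fres s N t - Fres s N (t0res s N)) := by
  have hb : 0 < N - 2 * s := by linarith
  have hab : N - 2 * s < 2 * s := by linarith
  have hratio : 0 < (N - 2 * s) / (2 * s) := div_pos hb (by linarith)
  have hexp : 2 * s - (N - 2 * s) = 4 * s - N := by ring
  have ht₀ab : t0res s N ^ (2 * s - (N - 2 * s)) = (N - 2 * s) / (2 * s) := by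
    rw [t0res, hexp, ← rpow_mul hratio.le, one_div_mul_cancel (by linarith), rpow_one]
  exact rpow_sub_rpow_quadratic_growth hb hab (rpow_pos_of_pos hratio _) ht₀ab

/-- Lemma C.2, quantitative lower bound in rescaled form: for
`2s < N < 4s`, `t₀` is the unique global minimum point of `F(t) = t^{2s} - t^{N-2s}` on
`(0,∞)`, and there is `c > 0` with `F(t) - F(t₀) ≥ c(t-t₀)²` on `(0, 2t₀]` and
`F(t) - F(t₀) ≥ c t₀^{N-2s}` for `t > 2t₀`. -/
theorem statement16 (s N : ℝ) (hs : 0 < s) (hN1 : 2 * s < N) (hN2 : N < 4 * s) :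
    (∀ t : ℝ, 0 < t → t ≠ t0res s N → Fres s N (t0res s N) < Fres s N t) ∧
      ∃ c : ℝ, 0 < c ∧
        (∀ t : ℝ, 0 < t → t ≤ 2 * t0res s N →
          c * (t - t0res s N) ^ 2 ≤ Fres s N t - Fres s N (t0res s N)) ∧
        (∀ t : ℝ, 2 * t0res s N < t →
          c * t0res s N ^ (N - 2 * s) ≤ Fres s N t - Fres s N (t0res s N)) :=
  statement16_general s N hN1 hN2
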